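/- If w ∈ ℝ^p is a standard Gaussian random vector, then for any u, v ∈ ℝ^p, E[cos(⟨w,u⟩)cos(⟨w,v⟩) + sin(⟨w,u⟩)sin(⟨w,v⟩)] = exp(−‖u − v‖²/2). -/

import Mathlib

/-!
Since `cos a cos b + sin a sin b = cos (a - b)`, the integrand is `cos ⟪w, u - v⟫`, the real part
of `exp (i ⟪w, u - v⟫)`. Its expectation is the real part of the characteristic function of the
standard Gaussian at `u - v`, namely `exp (-‖u - v‖² / 2)`.
-/

open MeasureTheory ProbabilityTheory

lemma integral_cos_inner_eq_re_charFun {E : Type*} [NormedAddCommGroup E] [InnerProductSpace ℝ E]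
    [MeasurableSpace E] [OpensMeasurableSpace E] (μ : Measure E) [IsFiniteMeasure μ] (t : E) :
    ∫ x, Real.cos (inner ℝ x t) ∂μ = (charFun μ t).re := by
  have hint : Integrable (fun x ↦ Complex.exp (inner ℝ x t * Complex.I)) μ :=
    (integrable_const (1 : ℝ)).mono' (by fun_prop)
      (.of_forall fun x ↦ (Complex.norm_exp_ofReal_mul_I _).le)
  simp_rw [charFun_apply, ← RCLike.re_to_complex, ← integral_re hint, RCLike.re_to_complex,
    Complex.exp_ofReal_mul_I_re]

lemma integral_cos_inner_stdGaussian {E : Type*} [NormedAddCommGroup E] [InnerProductSpace ℝ E]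
    [FiniteDimensional ℝ E] [MeasurableSpace E] [BorelSpace E] (t : E) :
    ∫ x, Real.cos (inner ℝ x t) ∂stdGaussian E = Real.exp (-‖t‖ ^ 2 / 2) := by
  rw [integral_cos_inner_eq_re_charFun, charFun_stdGaussian]
  exact_mod_cast Complex.exp_ofReal_re _

lemma integral_cos_sum_mul_gaussianReal {ι : Type*} [Fintype ι] (c : ι → ℝ) :
    ∫ w : ι → ℝ, Real.cos (∑ i, w i * c i) ∂(Measure.pi fun _ ↦ gaussianReal 0 1) =
      Real.exp (-(∑ i, c i ^ 2) / 2) := by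
  have h := integral_cos_inner_stdGaussian (WithLp.toLp 2 c)
  rw [← map_pi_eq_stdGaussian, integral_map (by fun_prop) (by fun_prop),
    EuclideanSpace.real_norm_sq_eq] at h
  simpa [PiLp.inner_apply, mul_comm] using h

theorem stmt_10 (p : ℕ) (u v : Fin p → ℝ) :
    ∫ w : Fin p → ℝ,
        (Real.cos (∑ j, w j * u j) * Real.cos (∑ j, w j * v j) +
          Real.sin (∑ j, w j * u j) * Real.sin (∑ j, w j * v j))
        ∂(Measure.pi fun _ : Fin p => gaussianReal 0 1) =
      Real.exp (-(∑ j, (u j - v j) ^ 2) / 2) := by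
  simp_rw [← Real.cos_sub, ← Finset.sum_sub_distrib, ← mul_sub]
  exact integral_cos_sum_mul_gaussianReal _
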